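/- The squared-norm quadratic relation: for all Z, W ∈ ℍⁿ, defining L_e = (1/2)Re(W†Z) (i.e. (1/2)⟨W,Z⟩), X_e = (1/4)|W|², Y_e = |Z|², and μ = (1/2)|Im(W†Z)|, one has (1/8)Re tr((ZW† + WZ†)²) = L_e² + X_e·Y_e - μ². -/

import Mathlib

open scoped Quaternion

private lemma re_sum' {α : Type*} (s : Finset α) (f : α → ℍ[ℝ]) :
    (∑ i ∈ s, f i).re = ∑ i ∈ s, (f i).re :=
  map_sum (AddMonoidHom.mk' QuaternionAlgebra.re fun _ _ => rfl) f s

private lemma re_mul_comm' (a b : ℍ[ℝ]) : (a * b).re = (b * a).re := by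
  rw [Quaternion.re_mul, Quaternion.re_mul]; ring

private lemma re_four (a b c d : ℍ[ℝ]) : ((a * b) * (c * d)).re = ((b * c) * (d * a)).re := by
  calc ((a * b) * (c * d)).re = ((c * d) * (a * b)).re := re_mul_comm' _ _
    _ = (c * (d * (a * b))).re := by rw [mul_assoc]
    _ = ((d * (a * b)) * c).re := re_mul_comm' _ _
    _ = ((b * c) * (d * a)).re := by
        rw [show (d * (a * b)) * c = (d * a) * (b * c) by noncomm_ring,
          re_mul_comm' (d * a) (b * c)]

/-- Primary quadratic relation reduced to quaternionic form: for `Z, W ∈ ℍⁿ`, with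
`q = W†Z`, `L_e = (1/2)Re q`, `X_e = (1/4)|W|²`, `Y_e = |Z|²`, `μ = (1/2)|Im q|`:
`(1/8) Re tr((ZW† + WZ†)²) = L_e² + X_e·Y_e - μ²`. -/
theorem primary_quadratic_relation (n : ℕ) (Z W : Fin n → ℍ[ℝ]) (q : ℍ[ℝ])
    (hq : q = ∑ i, star (W i) * Z i)
    (L X Y μ : ℝ)
    (hL : L = (1 / 2) * q.re)
    (hX : X = (1 / 4) * (∑ i, star (W i) * W i).re)
    (hY : Y = (∑ i, star (Z i) * Z i).re)
    (hμ : μ = (1 / 2) * Real.sqrt (Quaternion.normSq q.im)) :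
    (1 / 8) * (Matrix.trace ((Matrix.vecMulVec Z (fun j => star (W j))
        + Matrix.vecMulVec W (fun j => star (Z j))) ^ 2)).re
      = L ^ 2 + X * Y - μ ^ 2 := by
  set M : Matrix (Fin n) (Fin n) ℍ[ℝ] :=
    Matrix.vecMulVec Z (fun j => star (W j)) + Matrix.vecMulVec W (fun j => star (Z j)) with hM
  have hMij : ∀ i j, M i j = Z i * star (W j) + W i * star (Z j) := by
    intro i j; simp [hM, Matrix.vecMulVec_apply]
  have htr : (Matrix.trace (M ^ 2)).re
      = ∑ i, ∑ j, (M i j * M j i).re := by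
    rw [sq, Matrix.trace]
    rw [re_sum']
    refine Finset.sum_congr rfl fun i _ => ?_
    rw [Matrix.diag_apply, Matrix.mul_apply, re_sum']
  -- expand each summand
  have hterm : ∀ i j, (M i j * M j i).re
      = ((star (W i) * Z i) * (star (W j) * Z j)).re
        + Quaternion.normSq (W j) * Quaternion.normSq (Z i)
        + Quaternion.normSq (Z j) * Quaternion.normSq (W i)
        + ((star (Z j) * W j) * (star (Z i) * W i)).re := by
    intro i j
    rw [hMij, hMij, add_mul, mul_add, mul_add]
    rw [Quaternion.re_add, Quaternion.re_add, Quaternion.re_add]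
    rw [re_four (Z i) (star (W j)) (Z j) (star (W i)),
      re_four (Z i) (star (W j)) (W j) (star (Z i)),
      re_four (W i) (star (Z j)) (Z j) (star (W i)),
      re_four (W i) (star (Z j)) (W j) (star (Z i))]
    rw [show ((star (W j) * W j) * (star (Z i) * Z i)).re
        = Quaternion.normSq (W j) * Quaternion.normSq (Z i) by
      rw [Quaternion.star_mul_self, Quaternion.star_mul_self, ← Quaternion.coe_mul,
        Quaternion.re_coe]]
    rw [show ((star (Z j) * Z j) * (star (W i) * W i)).re
        = Quaternion.normSq (Z j) * Quaternion.normSq (W i) by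
      rw [Quaternion.star_mul_self, Quaternion.star_mul_self, ← Quaternion.coe_mul,
        Quaternion.re_coe]]
    rw [re_mul_comm' (star (W j) * Z j) (star (W i) * Z i)]
    ring
  have h1 : ∑ i, ∑ j, ((star (W i) * Z i) * (star (W j) * Z j)).re = (q * q).re := by
    rw [hq, Finset.sum_mul_sum, re_sum']
    refine Finset.sum_congr rfl fun i _ => (re_sum' _ _).symm
  have h4 : ∑ i, ∑ j, ((star (Z j) * W j) * (star (Z i) * W i)).re = (q * q).re := by
    have hsq : ∑ j, star (Z j) * W j = star q := by
      rw [hq, star_sum]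
      exact Finset.sum_congr rfl fun i _ => by rw [star_mul, star_star]
    calc ∑ i, ∑ j, ((star (Z j) * W j) * (star (Z i) * W i)).re
        = ∑ j, ∑ i, ((star (Z j) * W j) * (star (Z i) * W i)).re := Finset.sum_comm
      _ = ((∑ j, star (Z j) * W j) * (∑ i, star (Z i) * W i)).re := by
          rw [Finset.sum_mul_sum, re_sum']
          exact Finset.sum_congr rfl fun j _ => (re_sum' _ _).symm
      _ = (q * q).re := by
          rw [hsq, ← star_mul, Quaternion.re_star]
  have h2 : ∑ i, ∑ j, Quaternion.normSq (W j) * Quaternion.normSq (Z i)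
      = (∑ j, Quaternion.normSq (W j)) * (∑ i, Quaternion.normSq (Z i)) := by
    rw [Finset.sum_mul_sum, Finset.sum_comm]
  have h3 : ∑ i, ∑ j, Quaternion.normSq (Z j) * Quaternion.normSq (W i)
      = (∑ j, Quaternion.normSq (W j)) * (∑ i, Quaternion.normSq (Z i)) := by
    rw [Finset.sum_comm, ← Finset.sum_mul_sum, mul_comm]
  have hbig : (Matrix.trace (M ^ 2)).re
      = 2 * (q * q).re
        + 2 * ((∑ j, Quaternion.normSq (W j)) * (∑ i, Quaternion.normSq (Z i))) := by
    rw [htr]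
    have : ∑ i, ∑ j, (M i j * M j i).re
        = (∑ i, ∑ j, ((star (W i) * Z i) * (star (W j) * Z j)).re)
          + (∑ i, ∑ j, Quaternion.normSq (W j) * Quaternion.normSq (Z i))
          + (∑ i, ∑ j, Quaternion.normSq (Z j) * Quaternion.normSq (W i))
          + (∑ i, ∑ j, ((star (Z j) * W j) * (star (Z i) * W i)).re) := by
      rw [← Finset.sum_add_distrib, ← Finset.sum_add_distrib, ← Finset.sum_add_distrib]
      refine Finset.sum_congr rfl fun i _ => ?_
      rw [← Finset.sum_add_distrib, ← Finset.sum_add_distrib, ← Finset.sum_add_distrib]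
      exact Finset.sum_congr rfl fun j _ => hterm i j
    rw [this, h1, h2, h3, h4]; ring
  have hXval : (∑ i, star (W i) * W i).re = ∑ i, Quaternion.normSq (W i) := by
    rw [re_sum']
    exact Finset.sum_congr rfl fun i _ => by
      rw [Quaternion.star_mul_self, Quaternion.re_coe]
  have hYval : (∑ i, star (Z i) * Z i).re = ∑ i, Quaternion.normSq (Z i) := by
    rw [re_sum']
    exact Finset.sum_congr rfl fun i _ => by
      rw [Quaternion.star_mul_self, Quaternion.re_coe]
  have hμsq : μ ^ 2 = (1 / 4) * Quaternion.normSq q.im := by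
    rw [hμ, mul_pow, Real.sq_sqrt Quaternion.normSq_nonneg]
    ring
  have hqq : (q * q).re = q.re ^ 2 - Quaternion.normSq q.im := by
    rw [Quaternion.re_mul, Quaternion.normSq_def']
    simp [Quaternion.re_im, Quaternion.imI_im, Quaternion.imJ_im, Quaternion.imK_im]
    ring
  rw [hbig, hL, hX, hY, hXval, hYval, hμsq, hqq]
  ring
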